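/- Orthogonal Procrustes optimal value: for matrices A, B : Matrix (Fin m) (Fin n) ℝ, the set {‖Q·B − A‖_F² : Q a real m × m matrix with Qᵀ·Q = 1} has least element ‖A‖_F² + ‖B‖_F² − 2·‖B·Aᵀ‖_*, where ‖·‖_F is the Frobenius norm and ‖·‖_* the nuclear norm; in particular the minimum is attained by some orthogonal Q. -/

import Mathlib

open Matrix

/-- The spectral norm (largest singular value) of a real matrix: the `L2` operator norm
of the associated Euclidean linear map. -/
noncomputable def spectralNorm' {m n : ℕ} (A : Matrix (Fin m) (Fin n) ℝ) : ℝ :=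
  ‖LinearMap.toContinuousLinearMap (Matrix.toEuclideanLin A)‖

/-- The positive semidefinite square root of a positive semidefinite matrix
(the definition `Matrix.PosSemidef.sqrt` of the older Mathlib, since removed). -/
noncomputable def Matrix.PosSemidef.sqrt {n : Type*} [Fintype n] [DecidableEq n]
    {A : Matrix n n ℝ} (hA : A.PosSemidef) : Matrix n n ℝ :=
  hA.1.eigenvectorUnitary.1 * diagonal ((↑) ∘ (√·) ∘ hA.1.eigenvalues) *
  (star hA.1.eigenvectorUnitary : Matrix n n ℝ)

/-- The nuclear norm (sum of singular values) of a real matrix: the trace of the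
positive-semidefinite square root of `Aᴴ * A` (over `ℝ`, `Aᴴ = Aᵀ`). -/
noncomputable def nuclearNorm {m n : ℕ} (A : Matrix (Fin m) (Fin n) ℝ) : ℝ :=
  (Matrix.posSemidef_conjTranspose_mul_self A).sqrt.trace

/-- The Frobenius norm of a real matrix. -/
noncomputable def frobeniusNorm' {m n : ℕ} (C : Matrix (Fin m) (Fin n) ℝ) : ℝ :=
  Real.sqrt (∑ i, ∑ j, (C i j) ^ 2)

/-!
Since `Q` is orthogonal, `‖QB - A‖_F² = ‖A‖_F² + ‖B‖_F² - 2 tr(QM)` with `M = BAᵀ`, so the claim is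
that `tr(QM)` is maximised over orthogonal `Q` with maximum `tr |M|`, where `|M| = √(MᵀM)`.
Because `‖|M|x‖ = ‖Mx‖` for every `x`, the map `|M|x ↦ Mx` is a well-defined isometry of the range
of `|M|`; extending it to the whole space gives the polar decomposition `M = U|M|` with `U`
orthogonal. Then `tr(QM) = tr(QU|M|) ≤ tr |M|`, since in an eigenbasis of `|M|` the diagonal
entries of the orthogonal matrix `QU` are at most `1`, and `Q = Uᵀ` attains the bound.
-/

open Matrix

theorem LinearMap.exists_linearIsometryEquiv_apply_eq_of_norm_map_eq
    {𝕜 E F : Type*} [RCLike 𝕜] [NormedAddCommGroup E] [InnerProductSpace 𝕜 E]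
    [FiniteDimensional 𝕜 E] [AddCommGroup F] [Module 𝕜 F] {S T : F →ₗ[𝕜] E}
    (h : ∀ x, ‖S x‖ = ‖T x‖) : ∃ W : E ≃ₗᵢ[𝕜] E, ∀ x, W (S x) = T x := by
  have hker : ker S ≤ ker T := fun x hx => by
    rw [mem_ker, ← norm_eq_zero, ← h, norm_eq_zero]; exact hx
  let φ : range S →ₗ[𝕜] E := (ker S).liftQ T hker ∘ₗ S.quotKerEquivRange.symm.toLinearMap
  have hφ : ∀ x, φ ⟨S x, mem_range_self S x⟩ = T x := fun x => by simp [φ]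
  let L : range S →ₗᵢ[𝕜] E := ⟨φ, by rintro ⟨-, x, rfl⟩; rw [hφ]; exact (h x).symm⟩
  refine ⟨L.extend.toLinearIsometryEquiv rfl, fun x => ?_⟩
  exact (L.extend_apply ⟨S x, mem_range_self S x⟩).trans (hφ x)

namespace Matrix

section UnitaryGroup

variable {𝕜 n : Type*} [RCLike 𝕜] [Fintype n] [DecidableEq n]

theorem exists_mem_unitaryGroup_toEuclideanCLM_eq
    (W : EuclideanSpace 𝕜 n ≃ₗᵢ[𝕜] EuclideanSpace 𝕜 n) :
    ∃ U ∈ unitaryGroup n 𝕜, toEuclideanCLM (n := n) (𝕜 := 𝕜) U = W :=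
  ⟨_, Unitary.map_mem (toEuclideanCLM (n := n) (𝕜 := 𝕜)).symm
    (Unitary.linearIsometryEquiv.symm W).2, toEuclideanCLM.apply_symm_apply _⟩

theorem exists_mem_unitaryGroup_mul_eq_of_conjTranspose_mul_self_eq
    {S M : Matrix n n 𝕜} (h : Sᴴ * S = Mᴴ * M) : ∃ U ∈ unitaryGroup n 𝕜, U * S = M := by
  let T := toEuclideanCLM (n := n) (𝕜 := 𝕜)
  have norm_sq_eq : ∀ A x, ‖T A x‖ ^ 2 = RCLike.re (inner 𝕜 (T (Aᴴ * A) x) x) := fun A x => by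
    rw [ContinuousLinearMap.apply_norm_sq_eq_inner_adjoint_left, map_mul,
      ← star_eq_conjTranspose, map_star]
    rfl
  have hnorm : ∀ x, ‖T S x‖ = ‖T M x‖ := fun x => by
    rw [← sq_eq_sq₀ (norm_nonneg _) (norm_nonneg _), norm_sq_eq, norm_sq_eq, h]
  obtain ⟨W, hW⟩ := LinearMap.exists_linearIsometryEquiv_apply_eq_of_norm_map_eq
    (S := (T S).toLinearMap) (T := (T M).toLinearMap) hnorm
  obtain ⟨U, hU, hUW⟩ := exists_mem_unitaryGroup_toEuclideanCLM_eq W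
  refine ⟨U, hU, T.injective ?_⟩
  ext1 x
  calc T (U * S) x = T U (T S x) := by rw [map_mul]; rfl
    _ = T M x := by rw [show T U = W from hUW]; exact hW x

end UnitaryGroup

namespace PosSemidef

variable {n : Type*} [Fintype n] [DecidableEq n]

theorem sqrt_mul_sqrt {A : Matrix n n ℝ} (hA : A.PosSemidef) : hA.sqrt * hA.sqrt = A := by
  have hU := Unitary.star_mul_self_of_mem hA.1.eigenvectorUnitary.2
  conv_rhs => rw [hA.1.spectral_theorem, Unitary.conjStarAlgAut_apply]
  rw [sqrt]
  simp only [← mul_assoc]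
  rw [mul_assoc _ (star _), hU, mul_one, mul_assoc _ (diagonal _) (diagonal _),
    diagonal_mul_diagonal]
  congr 3
  funext i
  exact Real.mul_self_sqrt (hA.eigenvalues_nonneg i)

theorem posSemidef_sqrt {A : Matrix n n ℝ} (hA : A.PosSemidef) : hA.sqrt.PosSemidef := by
  rw [sqrt, star_eq_conjTranspose]
  exact ((posSemidef_diagonal_iff).2 fun i => Real.sqrt_nonneg _).mul_mul_conjTranspose_same _

theorem trace_mul_le_trace_of_mem_orthogonalGroup {R S : Matrix n n ℝ}
    (hR : R ∈ orthogonalGroup n ℝ) (hS : S.PosSemidef) : trace (R * S) ≤ trace S := by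
  obtain ⟨V, hV, d, hd, rfl⟩ : ∃ V ∈ unitaryGroup n ℝ, ∃ d : n → ℝ, 0 ≤ d ∧
      S = V * diagonal d * star V :=
    ⟨_, hS.1.eigenvectorUnitary.2, _, hS.eigenvalues_nonneg, hS.1.spectral_theorem⟩
  have trace_eq : ∀ P : Matrix n n ℝ,
      trace (P * (V * diagonal d * star V)) = ∑ i, (star V * P * V) i i * d i := by
    intro P
    rw [← mul_assoc, ← mul_assoc, trace_mul_cycle, ← mul_assoc]
    simp [trace, mul_diagonal]
  have hP : star V * R * V ∈ unitaryGroup n ℝ := mul_mem (mul_mem (Unitary.star_mem hV) hR) hV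
  calc trace (R * _) = ∑ i, (star V * R * V) i i * d i := trace_eq R
    _ ≤ ∑ i, d i := by
      gcongr with i
      exact mul_le_of_le_one_left (hd i)
        ((le_abs_self _).trans (entry_norm_bound_of_unitary hP i i))
    _ = trace _ := by simpa [Unitary.star_mul_self_of_mem hV] using (trace_eq 1).symm

end PosSemidef

theorem exists_mem_orthogonalGroup_mul_sqrt_eq {n : Type*} [Fintype n] [DecidableEq n]
    (M : Matrix n n ℝ) :
    ∃ U ∈ orthogonalGroup n ℝ, U * (posSemidef_conjTranspose_mul_self M).sqrt = M :=
  have hS := posSemidef_conjTranspose_mul_self M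
  exists_mem_unitaryGroup_mul_eq_of_conjTranspose_mul_self_eq <| by
    rw [hS.posSemidef_sqrt.1.eq, hS.sqrt_mul_sqrt]

end Matrix

theorem trace_mul_le_nuclearNorm {m : ℕ} {Q : Matrix (Fin m) (Fin m) ℝ}
    (hQ : Q ∈ orthogonalGroup (Fin m) ℝ) (M : Matrix (Fin m) (Fin m) ℝ) :
    trace (Q * M) ≤ nuclearNorm M := by
  obtain ⟨U, hU, hUM⟩ := exists_mem_orthogonalGroup_mul_sqrt_eq M
  conv_lhs => rw [← hUM, ← mul_assoc]
  exact PosSemidef.trace_mul_le_trace_of_mem_orthogonalGroup (mul_mem hQ hU)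
    (posSemidef_conjTranspose_mul_self M).posSemidef_sqrt

theorem exists_trace_mul_eq_nuclearNorm {m : ℕ} (M : Matrix (Fin m) (Fin m) ℝ) :
    ∃ Q ∈ orthogonalGroup (Fin m) ℝ, trace (Q * M) = nuclearNorm M := by
  obtain ⟨U, hU, hUM⟩ := exists_mem_orthogonalGroup_mul_sqrt_eq M
  refine ⟨star U, Unitary.star_mem hU, ?_⟩
  conv_lhs => rw [← hUM, ← mul_assoc, Unitary.star_mul_self_of_mem hU, one_mul]
  rfl

theorem frobeniusNorm'_sq {m n : ℕ} (C : Matrix (Fin m) (Fin n) ℝ) :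
    frobeniusNorm' C ^ 2 = trace (Cᵀ * C) := by
  rw [frobeniusNorm', Real.sq_sqrt (by positivity), Finset.sum_comm]
  simp [trace, mul_apply, pow_two]

theorem frobeniusNorm'_orthogonal_mul_sub_sq {m n : ℕ} {Q : Matrix (Fin m) (Fin m) ℝ}
    (hQ : Q ∈ orthogonalGroup (Fin m) ℝ) (A B : Matrix (Fin m) (Fin n) ℝ) :
    frobeniusNorm' (Q * B - A) ^ 2
      = frobeniusNorm' A ^ 2 + frobeniusNorm' B ^ 2 - 2 * trace (Q * (B * Aᵀ)) := by
  have hQB : (Q * B)ᵀ * (Q * B) = Bᵀ * B := by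
    rw [transpose_mul, Matrix.mul_assoc, ← Matrix.mul_assoc Qᵀ, (mem_orthogonalGroup_iff' _ _).1 hQ,
      Matrix.one_mul]
  have hAQB : trace (Aᵀ * (Q * B)) = trace (Q * (B * Aᵀ)) := by
    rw [trace_mul_comm, Matrix.mul_assoc]
  have hQBA : trace ((Q * B)ᵀ * A) = trace (Q * (B * Aᵀ)) := by
    rw [← trace_transpose, transpose_mul, transpose_transpose, hAQB]
  simp only [frobeniusNorm'_sq, transpose_sub, Matrix.sub_mul, Matrix.mul_sub, trace_sub, hQB,
    hAQB, hQBA]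
  ring

/-- Orthogonal Procrustes optimal value: the minimum of `‖Q·B − A‖_F²` over orthogonal
`Q` is `‖A‖_F² + ‖B‖_F² − 2·‖B·Aᵀ‖_*`, attained by some orthogonal `Q`. -/
theorem orthogonal_procrustes_optimal_value {m n : ℕ}
    (A B : Matrix (Fin m) (Fin n) ℝ) :
    (∀ Q : Matrix (Fin m) (Fin m) ℝ, Qᵀ * Q = 1 →
      frobeniusNorm' A ^ 2 + frobeniusNorm' B ^ 2 - 2 * nuclearNorm (B * Aᵀ)
        ≤ frobeniusNorm' (Q * B - A) ^ 2) ∧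
    (∃ Q : Matrix (Fin m) (Fin m) ℝ, Qᵀ * Q = 1 ∧
      frobeniusNorm' (Q * B - A) ^ 2
        = frobeniusNorm' A ^ 2 + frobeniusNorm' B ^ 2 - 2 * nuclearNorm (B * Aᵀ)) := by
  constructor
  · intro Q hQ
    have hQ' := (mem_orthogonalGroup_iff' _ _).2 hQ
    rw [frobeniusNorm'_orthogonal_mul_sub_sq hQ']
    linarith [trace_mul_le_nuclearNorm hQ' (B * Aᵀ)]
  · obtain ⟨Q, hQ, htrace⟩ := exists_trace_mul_eq_nuclearNorm (B * Aᵀ)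
    refine ⟨Q, (mem_orthogonalGroup_iff' _ _).1 hQ, ?_⟩
    rw [frobeniusNorm'_orthogonal_mul_sub_sq hQ, htrace]
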